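/- For each integer k, the integral I_k = ∫₀^∞ ∫_{-∞}^0 exp(-[(a+b-2k(b-a))² + (a-b)²]/2) da db equals ∫∫_{R_k} exp(-(x²+y²)) dx dy, where R_k is the cone in ℝ² generated by the vectors (k, k+1) and (k-1, k). Moreover, Σ_{k=-∞}^{∞} I_k = π/2. -/

import Mathlib

/-!
The substitution `(b, a) ↦ ((k-1)b - ka, kb - (k+1)a)` has determinant `1`, turns the quadratic
form of `I_k` into `x² + y²`, and maps the quadrant `b ≥ 0 ≥ a` onto the cone `R_k`. The cones
`R_k` overlap only along rays and cover the half-plane `{x < y}` (a point with `x < y` lies in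
`R_⌈x/(y-x)⌉`), so `Σ I_k` is the Gaussian integral over that half-plane, which by the symmetry
`(x, y) ↦ (y, x)` is half of `∫ exp(-(x² + y²)) = π`.
-/

open MeasureTheory

noncomputable section

/-- `I_k = ∫₀^∞ ∫_{-∞}^0 exp(-[(a+b-2k(b-a))² + (a-b)²]/2) da db`. -/
def Ik (k : ℤ) : ℝ :=
  ∫ b in Set.Ioi (0 : ℝ), ∫ a in Set.Iio (0 : ℝ),
    Real.exp (-(((a + b - 2 * (k : ℝ) * (b - a)) ^ 2 + (a - b) ^ 2) / 2))

/-- The cone generated by the vectors `(k, k+1)` and `(k-1, k)`. -/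
def cone (k : ℤ) : Set (ℝ × ℝ) :=
  {p | ∃ c d : ℝ, 0 ≤ c ∧ 0 ≤ d ∧
    p = c • ((k : ℝ), (k : ℝ) + 1) + d • ((k : ℝ) - 1, (k : ℝ))}

open Set Real

section LinearMeasurePreserving

variable {E : Type*} [NormedAddCommGroup E] [NormedSpace ℝ E] [MeasurableSpace E] [BorelSpace E]
  [FiniteDimensional ℝ E] (μ : Measure E) [μ.IsAddHaarMeasure]

theorem LinearMap.measurableEmbedding_of_det_ne_zero {f : E →ₗ[ℝ] E}
    (hf : LinearMap.det f ≠ 0) : MeasurableEmbedding f :=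
  (f.equivOfDetNeZero hf).toContinuousLinearEquiv.toHomeomorph.measurableEmbedding

theorem LinearMap.measurePreserving_of_abs_det_eq_one {f : E →ₗ[ℝ] E}
    (hf : |LinearMap.det f| = 1) : MeasurePreserving f μ μ := by
  have hf₀ : LinearMap.det f ≠ 0 := abs_ne_zero.1 (hf.symm ▸ one_ne_zero)
  refine ⟨f.continuous_of_finiteDimensional.measurable, ?_⟩
  rw [Measure.map_linearMap_addHaar_eq_smul_addHaar μ hf₀, abs_inv, hf, inv_one,
    ENNReal.ofReal_one, one_smul]

end LinearMeasurePreserving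

theorem volume_setOf_mul_add_mul_eq_zero {α β : ℝ} (h : α ≠ 0 ∨ β ≠ 0) :
    volume {p : ℝ × ℝ | α * p.1 + β * p.2 = 0} = 0 := by
  let ℓ : ℝ × ℝ →ₗ[ℝ] ℝ := α • LinearMap.fst ℝ ℝ ℝ + β • LinearMap.snd ℝ ℝ ℝ
  have hℓ : ∀ p, ℓ p = α * p.1 + β * p.2 := fun p => rfl
  change volume (ℓ.ker : Set (ℝ × ℝ)) = 0
  refine Measure.addHaar_submodule _ _ fun htop => ?_
  have h1 : (1, 0) ∈ ℓ.ker := htop ▸ Submodule.mem_top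
  have h2 : (0, 1) ∈ ℓ.ker := htop ▸ Submodule.mem_top
  rw [LinearMap.mem_ker, hℓ] at h1 h2
  norm_num at h1 h2
  tauto

theorem volume_setOf_fst_eq_snd : volume {p : ℝ × ℝ | p.1 = p.2} = 0 := by
  convert volume_setOf_mul_add_mul_eq_zero (α := 1) (β := -1) (Or.inl one_ne_zero) using 3
  simp only [one_mul, neg_one_mul, ← sub_eq_add_neg, sub_eq_zero]

theorem setIntegral_fst_lt_snd_of_comp_swap {f : ℝ × ℝ → ℝ} (hf : Integrable f)
    (hswap : ∀ p, f p.swap = f p) :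
    ∫ p in {p : ℝ × ℝ | p.1 < p.2}, f p = (∫ p, f p) / 2 := by
  set H : Set (ℝ × ℝ) := {p | p.1 < p.2}
  have hH : MeasurableSet H := measurableSet_lt measurable_fst measurable_snd
  have hcompl : (Hᶜ : Set (ℝ × ℝ)) =ᵐ[volume] (Prod.swap ⁻¹' H : Set (ℝ × ℝ)) := by
    refine ae_eq_set.2 ⟨measure_mono_null ?_ volume_setOf_fst_eq_snd, ?_⟩
    · rintro ⟨x, y⟩ ⟨hxy, hyx⟩
      exact le_antisymm (not_lt.1 hyx) (not_lt.1 hxy)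
    · exact measure_mono_null (fun p ⟨(hp : p.2 < p.1), hp'⟩ => hp' (lt_asymm hp)) measure_empty
  have hswap_pres : MeasurePreserving (Prod.swap : ℝ × ℝ → ℝ × ℝ) volume volume := by
    simpa only [Measure.volume_eq_prod] using Measure.measurePreserving_swap
  have hcompl_eq : ∫ p in Hᶜ, f p = ∫ p in H, f p :=
    calc ∫ p in Hᶜ, f p = ∫ p in Prod.swap ⁻¹' H, f p.swap := by
          simp only [hswap, setIntegral_congr_set hcompl]
      _ = ∫ p in H, f p :=
          hswap_pres.setIntegral_preimage_emb MeasurableEquiv.prodComm.measurableEmbedding f H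
  have := integral_add_compl hH hf
  rw [hcompl_eq] at this
  linarith

def planeGaussian (p : ℝ × ℝ) : ℝ := exp (-(p.1 ^ 2 + p.2 ^ 2))

theorem planeGaussian_eq_mul (p : ℝ × ℝ) :
    planeGaussian p = exp (-1 * p.1 ^ 2) * exp (-1 * p.2 ^ 2) := by
  rw [planeGaussian, ← exp_add]; ring_nf

theorem integrable_planeGaussian : Integrable planeGaussian := by
  have h := integrable_exp_neg_mul_sq one_pos
  rw [funext planeGaussian_eq_mul, Measure.volume_eq_prod]
  exact h.mul_prod h

theorem integral_planeGaussian : ∫ p, planeGaussian p = π := by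
  simp_rw [planeGaussian_eq_mul, Measure.volume_eq_prod]
  rw [integral_prod_mul (fun x : ℝ => exp (-1 * x ^ 2)) (fun x : ℝ => exp (-1 * x ^ 2)),
    integral_gaussian, div_one, mul_self_sqrt pi_nonneg]

theorem setIntegral_planeGaussian_fst_lt_snd :
    ∫ p in {p : ℝ × ℝ | p.1 < p.2}, planeGaussian p = π / 2 := by
  rw [setIntegral_fst_lt_snd_of_comp_swap integrable_planeGaussian, integral_planeGaussian]
  intro p
  simp only [planeGaussian, Prod.fst_swap, Prod.snd_swap, add_comm]

/-- Coordinates are ordered `(b, a)` as in the iterated integral `Ik`; in this order the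
determinant is `+1`. -/
def coneMap (k : ℤ) : (ℝ × ℝ) →ₗ[ℝ] ℝ × ℝ :=
  Matrix.toLin (Module.Basis.finTwoProd ℝ) (Module.Basis.finTwoProd ℝ)
    !![(k : ℝ) - 1, -k; k, -(k + 1)]

theorem coneMap_apply (k : ℤ) (p : ℝ × ℝ) :
    coneMap k p = ((k - 1) * p.1 - k * p.2, k * p.1 - (k + 1) * p.2) := by
  rw [coneMap, Matrix.toLin_finTwoProd_apply]
  ext <;> simp only <;> ring

theorem det_coneMap (k : ℤ) : LinearMap.det (coneMap k) = 1 := by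
  rw [coneMap, LinearMap.det_toLin, Matrix.det_fin_two_of]
  ring

theorem measurePreserving_coneMap (k : ℤ) : MeasurePreserving (coneMap k) :=
  LinearMap.measurePreserving_of_abs_det_eq_one volume (by rw [det_coneMap, abs_one])

theorem measurableEmbedding_coneMap (k : ℤ) : MeasurableEmbedding (coneMap k) :=
  LinearMap.measurableEmbedding_of_det_ne_zero (by rw [det_coneMap]; exact one_ne_zero)

theorem cone_eq_image_coneMap (k : ℤ) : cone k = coneMap k '' (Ici 0 ×ˢ Iic 0) := by
  ext p
  constructor
  · rintro ⟨c, d, hc, hd, rfl⟩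
    refine ⟨(d, -c), ⟨hd, neg_nonpos.2 hc⟩, ?_⟩
    rw [coneMap_apply]
    ext <;> simp <;> ring
  · rintro ⟨⟨b, a⟩, ⟨hb, ha : a ≤ 0⟩, rfl⟩
    refine ⟨-a, b, neg_nonneg.2 ha, hb, ?_⟩
    rw [coneMap_apply]
    ext <;> simp <;> ring

theorem mem_cone_iff (k : ℤ) (p : ℝ × ℝ) :
    p ∈ cone k ↔ p.1 ≤ k * (p.2 - p.1) ∧ k * (p.2 - p.1) ≤ p.2 := by
  constructor
  · rintro ⟨c, d, hc, hd, rfl⟩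
    constructor <;> simp <;> nlinarith
  · rintro ⟨h1, h2⟩
    refine ⟨p.2 - k * (p.2 - p.1), k * (p.2 - p.1) - p.1, by linarith, by linarith, ?_⟩
    ext <;> simp <;> ring

theorem measurableSet_cone (k : ℤ) : MeasurableSet (cone k) := by
  rw [cone_eq_image_coneMap]
  exact (measurableEmbedding_coneMap k).measurableSet_image.2
    (measurableSet_Ici.prod measurableSet_Iic)

theorem Ik_eq_setIntegral_quadrant (k : ℤ) :
    Ik k = ∫ p in Ioi 0 ×ˢ Iio 0, planeGaussian (coneMap k p) := by
  have hint : Integrable (fun p => planeGaussian (coneMap k p)) :=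
    ((measurePreserving_coneMap k).integrable_comp_emb (measurableEmbedding_coneMap k)).2
      integrable_planeGaussian
  rw [Measure.volume_eq_prod, setIntegral_prod _ hint.integrableOn]
  refine setIntegral_congr_fun measurableSet_Ioi fun b _ => ?_
  refine setIntegral_congr_fun measurableSet_Iio fun a _ => ?_
  rw [coneMap_apply, planeGaussian]
  ring_nf

theorem Ik_eq_setIntegral_cone (k : ℤ) : Ik k = ∫ p in cone k, planeGaussian p := by
  have hquadrant : (Ioi 0 ×ˢ Iio 0 : Set (ℝ × ℝ)) =ᵐ[volume] (Ici 0 ×ˢ Iic 0 : Set (ℝ × ℝ)) := by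
    rw [Measure.volume_eq_prod]
    exact Measure.set_prod_ae_eq Ioi_ae_eq_Ici Iio_ae_eq_Iic
  rw [Ik_eq_setIntegral_quadrant, setIntegral_congr_set hquadrant, cone_eq_image_coneMap,
    (measurePreserving_coneMap k).setIntegral_image_emb (measurableEmbedding_coneMap k)]

theorem cone_inter_cone_subset {j k : ℤ} (hjk : j < k) :
    cone j ∩ cone k ⊆ {p | p.1 = p.2} ∪ {p | (1 + j) * p.1 + (-j) * p.2 = 0} := by
  rintro ⟨x, y⟩ ⟨hj, hk⟩
  rw [mem_cone_iff] at hj hk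
  have hjk' : (j : ℝ) + 1 ≤ k := by exact_mod_cast hjk
  rcases (hk.1.trans hk.2).eq_or_lt with hxy | hxy
  · exact Or.inl hxy
  · right
    show (1 + j) * x + (-j) * y = 0
    nlinarith [hj.1, hj.2, hk.1, hk.2]

theorem pairwise_aedisjoint_cone : Pairwise (Function.onFun (AEDisjoint volume) cone) := by
  refine Pairwise.of_lt fun j k hjk => measure_mono_null (cone_inter_cone_subset hjk) ?_
  refine measure_union_null volume_setOf_fst_eq_snd (volume_setOf_mul_add_mul_eq_zero ?_)
  by_contra! h
  linarith [h.1, h.2]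

theorem cone_subset_setOf_fst_le_snd (k : ℤ) : cone k ⊆ {p | p.1 ≤ p.2} := fun p hp =>
  ((mem_cone_iff k p).1 hp).elim le_trans

theorem setOf_fst_lt_snd_subset_iUnion_cone : {p : ℝ × ℝ | p.1 < p.2} ⊆ ⋃ k, cone k := by
  rintro ⟨x, y⟩ (hxy : x < y)
  have hd : 0 < y - x := sub_pos.2 hxy
  set t := x / (y - x)
  have ht : t * (y - x) = x := div_mul_cancel₀ x hd.ne'
  have h1 := mul_le_mul_of_nonneg_right (Int.le_ceil t) hd.le
  have h2 := mul_lt_mul_of_pos_right (Int.ceil_lt_add_one t) hd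
  refine mem_iUnion.2 ⟨⌈t⌉, (mem_cone_iff _ _).2 ⟨?_, ?_⟩⟩ <;> dsimp only <;> nlinarith

theorem iUnion_cone_ae_eq : (⋃ k, cone k) =ᵐ[volume] {p : ℝ × ℝ | p.1 < p.2} := by
  refine ae_eq_set.2 ⟨measure_mono_null ?_ volume_setOf_fst_eq_snd, ?_⟩
  · rintro p ⟨hp, hlt : ¬ p.1 < p.2⟩
    obtain ⟨k, hk⟩ := mem_iUnion.1 hp
    exact le_antisymm (cone_subset_setOf_fst_le_snd k hk) (not_lt.1 hlt)
  · rw [sdiff_eq_bot_iff.2 setOf_fst_lt_snd_subset_iUnion_cone]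
    exact measure_empty

/-- `I_k` equals the Gaussian integral over the cone `R_k`, and `Σ_k I_k = π/2`. -/
theorem Ik_eq_cone_integral_and_sum :
    (∀ k : ℤ, Ik k = ∫ p in cone k, Real.exp (-(p.1 ^ 2 + p.2 ^ 2))) ∧
    ∑' k : ℤ, Ik k = Real.pi / 2 := by
  refine ⟨Ik_eq_setIntegral_cone, ?_⟩
  calc ∑' k, Ik k = ∑' k, ∫ p in cone k, planeGaussian p := by simp_rw [Ik_eq_setIntegral_cone]
    _ = ∫ p in ⋃ k, cone k, planeGaussian p :=
        (integral_iUnion_ae (fun k => (measurableSet_cone k).nullMeasurableSet)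
          pairwise_aedisjoint_cone integrable_planeGaussian.integrableOn).symm
    _ = ∫ p in {p : ℝ × ℝ | p.1 < p.2}, planeGaussian p := setIntegral_congr_set iUnion_cone_ae_eq
    _ = π / 2 := setIntegral_planeGaussian_fst_lt_snd

end
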